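/- Let n be a positive integer, let g : ℤ_n → ℤ_n be a functional tree map, and let σ ∈ Φ(g), i.e., σ is a permutation of ℤ_n such that, writing h = σ∘g∘σ⁻¹, the set of integers {(−1)^{d_h(v)}·(h(v) − v) : v ∈ ℤ_n} equals {0,1,…,n−1}. Then the evaluation of the polynomial certificate at σ satisfies |P_g(σ(0), σ(1), …, σ(n−1))| = ∏_{k∈ℤ_n} k!·(n−1+k)!; in particular P_g(σ(0),…,σ(n−1)) ≠ 0. -/

import Mathlib

open MvPolynomial

/-- `g : Fin n → Fin n` is a functional tree map if the image of `Fin n` under the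
`(n-1)`-fold iterate of `g` is a singleton. -/
def IsFunctionalTreeMap (n : ℕ) (g : Fin n → Fin n) : Prop :=
  ∃ r : Fin n, ∀ v : Fin n, g^[n - 1] v = r

/-- The distance from `v` to the root of the functional tree prescribed by `g`. -/
noncomputable def treeDist (n : ℕ) (g : Fin n → Fin n) (v : Fin n) : ℕ :=
  sInf {k : ℕ | g^[k] v = g^[n - 1] v}

/-- `σ` witnesses a β⃗-labeling of `g` (i.e. `σ ∈ Φ(g)`). -/
def IsBetaLabeling (n : ℕ) (g : Fin n → Fin n) (σ : Equiv.Perm (Fin n)) : Prop :=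
  (Set.range fun v : Fin n =>
      ((-1 : ℤ) ^ treeDist n (⇑σ ∘ g ∘ ⇑σ.symm) v) *
        (((σ (g (σ.symm v)) : ℕ) : ℤ) - ((v : ℕ) : ℤ)))
    = Set.Ico (0 : ℤ) (n : ℤ)

/-- The edge label binomial `(-1)^{d_g(v)} (x_{g(v)} - x_v)` over `ℤ`. -/
noncomputable def edgeBinom (n : ℕ) (g : Fin n → Fin n) (v : Fin n) :
    MvPolynomial (Fin n) ℤ :=
  (-1 : MvPolynomial (Fin n) ℤ) ^ treeDist n g v * (X (g v) - X v)

/-- The polynomial certificate of decomposition `P_g = V ⬝ E_g ⬝ N_g` over `ℤ`. -/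
noncomputable def certP (n : ℕ) (g : Fin n → Fin n) : MvPolynomial (Fin n) ℤ :=
  (∏ v : Fin n, ∏ u ∈ Finset.Iio v, (X v - X u)) *
    (∏ v : Fin n, ∏ u ∈ Finset.Iio v, (edgeBinom n g v - edgeBinom n g u)) *
    (∏ v : Fin n, ∏ i ∈ Finset.Ioo 0 n, (edgeBinom n g v + C (i : ℤ)))

/-! At a β-labeling σ both the vertex values `σ v` and the edge labels
`(-1)^{d(v)} (σ (g v) - σ v)` run through `0, …, n-1` exactly once; for the edge labels this
is the defining property of `Φ(g)` transported back along σ, since `d` is invariant under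
conjugation.
Hence `V` and `E` are, up to sign, the Vandermonde determinant of `0, …, n-1`, which is
`∏ k!`, while `N = ∏_k (k+1)(k+2)⋯(k+n-1) = ∏_k (n-1+k)! / k!`. -/

open Finset Matrix
open scoped Nat

theorem prod_prod_Iio_sub_eq_det_vandermonde {R : Type*} [CommRing R] {n : ℕ} (c : Fin n → R) :
    ∏ v : Fin n, ∏ u ∈ Iio v, (c v - c u) = (vandermonde c).det := by
  rw [det_vandermonde]
  exact prod_comm' (by simp)

theorem det_vandermonde_natCast (n : ℕ) :
    (vandermonde fun v : Fin n => ((v : ℕ) : ℤ)).det = ∏ k ∈ range n, (k ! : ℤ) := by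
  cases n with
  | zero => simp
  | succ m =>
    rw [det_vandermonde_id_eq_superFactorial, ← Nat.prod_range_succ_factorial]
    push_cast
    rfl

theorem abs_prod_prod_Iio_perm_sub {n : ℕ} (π : Equiv.Perm (Fin n)) :
    |∏ v : Fin n, ∏ u ∈ Iio v, (((π v : ℕ) : ℤ) - π u)| = ∏ k ∈ range n, (k ! : ℤ) := by
  have hperm : vandermonde (fun v => ((π v : ℕ) : ℤ)) =
      (vandermonde fun v : Fin n => ((v : ℕ) : ℤ)).submatrix π id := rfl
  rw [prod_prod_Iio_sub_eq_det_vandermonde, hperm, det_permute, Int.cast_id, abs_mul,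
    Equiv.Perm.sign_abs, one_mul, det_vandermonde_natCast, abs_of_nonneg (by positivity)]

theorem factorial_mul_prod_Ioo_add (k n : ℕ) :
    k ! * ∏ i ∈ Ioo 0 n, (k + i) = (n - 1 + k)! := by
  rw [← Finset.Ico_add_one_left_eq_Ioo, prod_Ico_eq_prod_range]
  have hasc := Nat.factorial_mul_ascFactorial k (n - 1)
  rw [Nat.ascFactorial_eq_prod_range] at hasc
  simp only [add_comm (n - 1) k, ← hasc, zero_add, add_assoc]

theorem prod_perm_natCast {M : Type*} [CommMonoid M] {n : ℕ} (π : Equiv.Perm (Fin n))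
    (f : ℕ → M) :
    ∏ v : Fin n, f (π v) = ∏ k ∈ range n, f k := by
  rw [Equiv.prod_comp π (fun v : Fin n => f v), Fin.prod_univ_eq_prod_range]

theorem exists_perm_natCast_eq_of_range_eq_Ico {n : ℕ} {c : Fin n → ℤ}
    (hc : Set.range c = Set.Ico 0 (n : ℤ)) : ∃ π : Equiv.Perm (Fin n), ∀ v, c v = π v := by
  have hc_mem (v : Fin n) : 0 ≤ c v ∧ c v < n := by
    simpa only [hc, Set.mem_Ico] using Set.mem_range_self (f := c) v
  let e (v : Fin n) : Fin n := ⟨(c v).toNat, by have := hc_mem v; omega⟩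
  have he (v : Fin n) : c v = e v := by simp [e, (hc_mem v).1]
  have he_surj : Function.Surjective e := by
    intro k
    obtain ⟨v, hv⟩ : ((k : ℕ) : ℤ) ∈ Set.range c := hc ▸ ⟨by positivity, by simp⟩
    exact ⟨v, Fin.ext (by rw [he] at hv; exact_mod_cast hv)⟩
  exact ⟨Equiv.ofBijective e (Finite.surjective_iff_bijective.mp he_surj), he⟩

theorem abs_prod_Iio_sub_mul_prod_Iio_sub_mul_prod_Ioo_add_perm {n : ℕ}
    (π τ : Equiv.Perm (Fin n)) :
    |(∏ v : Fin n, ∏ u ∈ Iio v, (((π v : ℕ) : ℤ) - π u)) *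
        (∏ v : Fin n, ∏ u ∈ Iio v, (((τ v : ℕ) : ℤ) - τ u)) *
        ∏ v : Fin n, ∏ i ∈ Ioo 0 n, (((τ v : ℕ) : ℤ) + i)| =
      ∏ k ∈ range n, ((k ! : ℤ) * ((n - 1 + k)! : ℤ)) := by
  rw [abs_mul, abs_mul, abs_prod_prod_Iio_perm_sub, abs_prod_prod_Iio_perm_sub,
    abs_of_nonneg (by positivity), prod_perm_natCast τ fun k => ∏ i ∈ Ioo 0 n, ((k : ℤ) + i),
    ← prod_mul_distrib, ← prod_mul_distrib]
  refine prod_congr rfl fun k _ => ?_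
  rw [mul_assoc, ← factorial_mul_prod_Ioo_add]
  push_cast
  rfl

theorem treeDist_conj {n : ℕ} (σ : Equiv.Perm (Fin n)) (g : Fin n → Fin n) (v : Fin n) :
    treeDist n (σ ∘ g ∘ σ.symm) (σ v) = treeDist n g v := by
  have hconj : Function.Semiconj σ g (σ ∘ g ∘ σ.symm) := fun v => by simp
  simp only [treeDist, ← (hconj.iterate_right _).eq, σ.injective.eq_iff]

theorem eval_edgeBinom {n : ℕ} (g : Fin n → Fin n) (x : Fin n → ℤ) (v : Fin n) :
    eval x (edgeBinom n g v) = (-1) ^ treeDist n g v * (x (g v) - x v) := by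
  simp [edgeBinom]

theorem range_eval_edgeBinom_of_isBetaLabeling {n : ℕ} {g : Fin n → Fin n}
    {σ : Equiv.Perm (Fin n)} (hσ : IsBetaLabeling n g σ) :
    Set.range (fun v => eval (fun i => ((σ i : ℕ) : ℤ)) (edgeBinom n g v)) =
      Set.Ico 0 (n : ℤ) := by
  rw [← hσ]
  conv_rhs => rw [← σ.surjective.range_comp]
  congr 1
  ext v
  simp [eval_edgeBinom, treeDist_conj]

theorem eval_certP {n : ℕ} (g : Fin n → Fin n) (x : Fin n → ℤ) :
    eval x (certP n g) =
      (∏ v : Fin n, ∏ u ∈ Iio v, (x v - x u)) *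
        (∏ v : Fin n, ∏ u ∈ Iio v, (eval x (edgeBinom n g v) - eval x (edgeBinom n g u))) *
        ∏ v : Fin n, ∏ i ∈ Ioo 0 n, (eval x (edgeBinom n g v) + i) := by
  simp [certP]

theorem certP_eval_at_beta_labeling_general
    (n : ℕ) (g : Fin n → Fin n)
    (σ : Equiv.Perm (Fin n)) (hσ : IsBetaLabeling n g σ) :
    |eval (fun i : Fin n => ((σ i : ℕ) : ℤ)) (certP n g)| =
        ∏ k ∈ Finset.range n, ((k.factorial : ℤ) * ((n - 1 + k).factorial : ℤ)) ∧
      eval (fun i : Fin n => ((σ i : ℕ) : ℤ)) (certP n g) ≠ 0 := by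
  obtain ⟨τ, hτ⟩ :=
    exists_perm_natCast_eq_of_range_eq_Ico (range_eval_edgeBinom_of_isBetaLabeling hσ)
  have habs : |eval (fun i : Fin n => ((σ i : ℕ) : ℤ)) (certP n g)| =
      ∏ k ∈ Finset.range n, ((k.factorial : ℤ) * ((n - 1 + k).factorial : ℤ)) := by
    rw [eval_certP]
    simp only [hτ]
    exact abs_prod_Iio_sub_mul_prod_Iio_sub_mul_prod_Ioo_add_perm σ τ
  refine ⟨habs, abs_pos.mp ?_⟩
  rw [habs]
  positivity

/-- For `σ ∈ Φ(g)`, the evaluation of the certificate at `σ` has absolute value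
`∏_{k∈ℤ_n} k! (n-1+k)!`; in particular it is nonzero. -/
theorem certP_eval_at_beta_labeling
    (n : ℕ) (hn : 0 < n) (g : Fin n → Fin n) (hg : IsFunctionalTreeMap n g)
    (σ : Equiv.Perm (Fin n)) (hσ : IsBetaLabeling n g σ) :
    |eval (fun i : Fin n => ((σ i : ℕ) : ℤ)) (certP n g)| =
        ∏ k ∈ Finset.range n, ((k.factorial : ℤ) * ((n - 1 + k).factorial : ℤ)) ∧
      eval (fun i : Fin n => ((σ i : ℕ) : ℤ)) (certP n g) ≠ 0 :=
  certP_eval_at_beta_labeling_general n g σ hσ
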